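/- For every r > 0, the real part of S_r is strictly positive on the annulus A_r = {z : e^{-r} < |z| < 1}. -/

import Mathlib

/-!
Pairing the terms `k` and `-k` writes the symmetric partial sums as `(1 + z)/(1 - z)` plus a
series converging uniformly on the closed annulus, so the limit `S` is holomorphic on `A_r` and
continuous on its closure minus the point `1`. Its real part vanishes on the unit circle, and on
the inner circle the terms `k` and `-k-1` have opposite real parts, leaving one nonnegative term.
Near the singularity `Re S ≥ -C |w - 1|`, so the maximum principle for `exp (-S)` on the annulus
with a small disc about `1` removed gives `Re S ≥ 0`. Strict positivity then follows from the
maximum modulus principle on the connected annulus, since `Re S > 0` on the negative real axis,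
where every pair of terms is a positive real number.
-/

open Complex Filter Topology

/-- Partial symmetric sums of the annulus Schwarz kernel
`S_r(z) = lim_{N→∞} Σ_{k=-N}^{N} (e^{2kr}+z)/(e^{2kr}-z)`. -/
noncomputable def annulusSum (r : ℝ) (z : ℂ) (N : ℕ) : ℂ :=
  ∑ k ∈ Finset.Icc (-(N : ℤ)) (N : ℤ),
    (Complex.exp (2 * (k : ℂ) * (r : ℂ)) + z) / (Complex.exp (2 * (k : ℂ) * (r : ℂ)) - z)

lemma ofReal_ne_of_norm_ne {a : ℝ} {w : ℂ} (h : ‖w‖ ≠ |a|) : (a : ℂ) ≠ w := by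
  rintro rfl
  simp at h

noncomputable def schwarzTerm (a z : ℂ) : ℂ := (a + z) / (a - z)

lemma differentiableOn_schwarzTerm (a : ℂ) : DifferentiableOn ℂ (schwarzTerm a) {a}ᶜ :=
  ((differentiableOn_const a).add differentiableOn_id).div
    ((differentiableOn_const a).sub differentiableOn_id) fun _ hw => sub_ne_zero.2 (Ne.symm hw)

lemma re_schwarzTerm_ofReal (a : ℝ) (z : ℂ) :
    (schwarzTerm a z).re = (a ^ 2 - ‖z‖ ^ 2) / ‖(a : ℂ) - z‖ ^ 2 := by
  rw [schwarzTerm, Complex.div_re, ← add_div, Complex.sq_norm, Complex.sq_norm]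
  congr 1
  simp [Complex.normSq_apply]
  ring

lemma re_schwarzTerm_ofReal_nonneg {a : ℝ} {z : ℂ} (h : ‖z‖ ≤ |a|) :
    0 ≤ (schwarzTerm a z).re := by
  rw [re_schwarzTerm_ofReal, ← sq_abs a]
  have := norm_nonneg z
  exact div_nonneg (by nlinarith) (sq_nonneg _)

lemma re_schwarzTerm_ofReal_pos {a : ℝ} {z : ℂ} (h : ‖z‖ < |a|) :
    0 < (schwarzTerm a z).re := by
  have hne : (a : ℂ) - z ≠ 0 := sub_ne_zero.2 (ofReal_ne_of_norm_ne h.ne)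
  rw [re_schwarzTerm_ofReal, ← sq_abs a]
  have := norm_nonneg z
  exact div_pos (by nlinarith) (by positivity)

lemma re_schwarzTerm_add_re_schwarzTerm_eq_zero {a b : ℝ} {z : ℂ} (hab : ‖z‖ ^ 2 = a * b)
    (ha : (a : ℂ) ≠ z) (hb : (b : ℂ) ≠ z) :
    (schwarzTerm a z).re + (schwarzTerm b z).re = 0 := by
  have expand : ∀ c : ℝ, ‖(c : ℂ) - z‖ ^ 2 = c ^ 2 - 2 * c * z.re + a * b := fun c => by
    rw [← hab, Complex.sq_norm, Complex.sq_norm]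
    simp [Complex.normSq_apply]
    ring
  have hA : ‖(a : ℂ) - z‖ ^ 2 ≠ 0 := by simpa [sub_eq_zero] using ha
  have hB : ‖(b : ℂ) - z‖ ^ 2 ≠ 0 := by simpa [sub_eq_zero] using hb
  rw [re_schwarzTerm_ofReal, re_schwarzTerm_ofReal, div_add_div _ _ hA hB, hab, expand, expand,
    div_eq_zero_iff]
  left
  ring

lemma schwarzTerm_add_schwarzTerm_of_mul_eq_one {a b z : ℂ} (hab : a * b = 1)
    (ha : a ≠ z) (hb : b ≠ z) :
    schwarzTerm a z + schwarzTerm b z = 2 * (1 - z ^ 2) / ((a - z) * (b - z)) := by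
  have ha' : a - z ≠ 0 := sub_ne_zero.2 ha
  have hb' : b - z ≠ 0 := sub_ne_zero.2 hb
  rw [schwarzTerm, schwarzTerm]
  field_simp
  linear_combination 2 * hab

/-- Maximum modulus for `exp (-F)` on `U` minus the `δ`-disc about `p`. -/
lemma neg_abs_mul_le_re_of_frontier_of_lower_bound {U : Set ℂ} (hUb : Bornology.IsBounded U)
    {F : ℂ → ℂ} {p : ℂ} {C δ : ℝ}
    (hd : DifferentiableOn ℂ F U) (hc : ContinuousOn F (closure U \ {p}))
    (hfr : ∀ w ∈ frontier U, w ≠ p → 0 ≤ (F w).re)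
    (hlow : ∀ w ∈ closure U, w ≠ p → -(C * dist w p) ≤ (F w).re)
    (hδ : 0 < δ) {z : ℂ} (hz : z ∈ U) (hδz : δ < dist z p) : -(|C| * δ) ≤ (F z).re := by
  have hdist : Continuous fun w => dist w p := continuous_id.dist continuous_const
  set V := U ∩ {w | δ < dist w p}
  have hVcl : closure V ⊆ closure U ∩ {w | δ ≤ dist w p} :=
    (closure_inter_subset_inter_closure _ _).trans
      (Set.inter_subset_inter_right _ (closure_lt_subset_le continuous_const hdist))
  have hVp : closure V ⊆ closure U \ {p} := fun w hw => by
    refine ⟨(hVcl hw).1, fun hwp => ?_⟩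
    have := (hVcl hw).2
    rw [Set.mem_singleton_iff.1 hwp, Set.mem_ofPred_eq, dist_self] at this
    linarith
  have hdc : DiffContOnCl ℂ (fun w => cexp (-F w)) V :=
    ⟨(hd.mono Set.inter_subset_left).neg.cexp, ((hc.mono hVp).neg.cexp)⟩
  have hfrV : ∀ w ∈ frontier V, ‖cexp (-F w)‖ ≤ Real.exp (|C| * δ) := by
    intro w hw
    rw [Complex.norm_exp, neg_re, Real.exp_le_exp]
    rcases frontier_inter_subset _ _ hw with ⟨hwU, hwδ⟩ | ⟨hwU, hwδ⟩
    · have hwp : w ≠ p := fun h => by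
        have := closure_lt_subset_le continuous_const hdist hwδ
        simp [h] at this
        linarith
      linarith [hfr w hwU hwp, mul_nonneg (abs_nonneg C) hδ.le]
    · have hwδ' : δ = dist w p := frontier_lt_subset_eq continuous_const hdist hwδ
      have hwp : w ≠ p := fun h => by simp [h] at hwδ'; linarith
      have := hlow w hwU hwp
      rw [← hwδ'] at this
      nlinarith [le_abs_self C]
  have := Complex.norm_le_of_forall_mem_frontier_norm_le (hUb.subset Set.inter_subset_left)
    hdc hfrV (subset_closure ⟨hz, hδz⟩)
  rw [Complex.norm_exp, neg_re, Real.exp_le_exp] at this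
  linarith

lemma re_nonneg_of_frontier_of_lower_bound {U : Set ℂ} (hUb : Bornology.IsBounded U)
    {F : ℂ → ℂ} {p : ℂ} {C : ℝ}
    (hd : DifferentiableOn ℂ F U) (hc : ContinuousOn F (closure U \ {p}))
    (hfr : ∀ w ∈ frontier U, w ≠ p → 0 ≤ (F w).re)
    (hlow : ∀ w ∈ closure U, w ≠ p → -(C * dist w p) ≤ (F w).re)
    {z : ℂ} (hz : z ∈ U) (hzp : z ≠ p) : 0 ≤ (F z).re := by
  have hlim : Tendsto (fun δ => -(|C| * δ)) (𝓝[>] 0) (𝓝 0) := by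
    have : Tendsto (fun δ : ℝ => -(|C| * δ)) (𝓝 0) (𝓝 (-(|C| * 0))) :=
      ((continuous_const.mul continuous_id).neg).tendsto 0
    simpa using this.mono_left nhdsWithin_le_nhds
  refine le_of_tendsto hlim ?_
  filter_upwards [Ioo_mem_nhdsGT (dist_pos.2 hzp)] with δ hδ using
    neg_abs_mul_le_re_of_frontier_of_lower_bound hUb hd hc hfr hlow hδ.1 hz hδ.2

lemma re_pos_of_re_nonneg {U : Set ℂ} (hU : IsOpen U) (hpc : IsPreconnected U) {F : ℂ → ℂ}
    (hd : DifferentiableOn ℂ F U) (hnn : ∀ w ∈ U, 0 ≤ (F w).re) {w₀ : ℂ}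
    (hw₀ : w₀ ∈ U) (hpos : 0 < (F w₀).re) {z : ℂ} (hz : z ∈ U) : 0 < (F z).re := by
  refine (hnn z hz).lt_of_ne fun h => ?_
  -- `z` maximises `‖exp (-F)‖ = exp (-re F)` on `U`, so this norm is constant
  have hmax : IsMaxOn (norm ∘ fun w => cexp (-F w)) U z := fun w hw => by
    simp [Complex.norm_exp, ← h, hnn w hw]
  have := Complex.norm_eqOn_of_isPreconnected_of_isMaxOn hpc hU hd.neg.cexp hz hmax hw₀
  simp [Complex.norm_exp, ← h] at this
  linarith

section Annulus

variable {r : ℝ}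

def openAnnulus (r : ℝ) : Set ℂ := {w | Real.exp (-r) < ‖w‖ ∧ ‖w‖ < 1}

def closedAnnulus (r : ℝ) : Set ℂ := {w | Real.exp (-r) ≤ ‖w‖ ∧ ‖w‖ ≤ 1}

lemma isOpen_openAnnulus : IsOpen (openAnnulus r) :=
  (isOpen_lt continuous_const continuous_norm).inter (isOpen_lt continuous_norm continuous_const)

lemma isClosed_closedAnnulus : IsClosed (closedAnnulus r) :=
  (isClosed_le continuous_const continuous_norm).inter
    (isClosed_le continuous_norm continuous_const)

lemma closure_openAnnulus_subset : closure (openAnnulus r) ⊆ closedAnnulus r :=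
  closure_minimal (fun _ hw => ⟨hw.1.le, hw.2.le⟩) isClosed_closedAnnulus

lemma frontier_openAnnulus_subset :
    frontier (openAnnulus r) ⊆ {w | ‖w‖ = Real.exp (-r)} ∪ {w | ‖w‖ = 1} := by
  refine (frontier_inter_subset _ _).trans (Set.union_subset_union ?_ ?_)
  · exact Set.inter_subset_left.trans
      ((frontier_lt_subset_eq continuous_const continuous_norm).trans fun _ hw => hw.symm)
  · exact Set.inter_subset_right.trans (frontier_lt_subset_eq continuous_norm continuous_const)

lemma isBounded_openAnnulus : Bornology.IsBounded (openAnnulus r) :=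
  (Metric.isBounded_ball (x := (0 : ℂ)) (r := 1)).subset fun _ hw => mem_ball_zero_iff.2 hw.2

/-- The annulus is the image under `exp` of a vertical strip. -/
lemma isPreconnected_openAnnulus : IsPreconnected (openAnnulus r) := by
  have hstrip : IsPreconnected {u : ℂ | u.re ∈ Set.Ioo (-r) 0} :=
    ((convex_Ioo (-r) 0).linear_preimage Complex.reLm).isPreconnected
  convert hstrip.image _ Complex.continuous_exp.continuousOn
  ext w
  constructor
  · rintro ⟨hw₁, hw₂⟩
    have hw₀ : w ≠ 0 := norm_pos_iff.1 ((Real.exp_pos _).trans hw₁)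
    refine ⟨Complex.log w, ⟨?_, ?_⟩, Complex.exp_log hw₀⟩
    · rw [Complex.log_re, Real.lt_log_iff_exp_lt (norm_pos_iff.2 hw₀)]
      exact hw₁
    · rw [Complex.log_re]
      exact Real.log_neg (norm_pos_iff.2 hw₀) hw₂
  · rintro ⟨u, hu, rfl⟩
    rw [openAnnulus, Set.mem_ofPred_eq, Complex.norm_exp, Real.exp_lt_exp, Real.exp_lt_one_iff]
    exact hu

lemma cexp_two_mul_intCast_mul (r : ℝ) (k : ℤ) :
    cexp (2 * k * r) = (Real.exp (2 * k * r) : ℂ) := by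
  push_cast
  rfl

lemma ofReal_exp_mul_ofReal_exp_neg (x : ℝ) : (Real.exp x : ℂ) * Real.exp (-x) = 1 := by
  rw [← Complex.ofReal_mul, ← Real.exp_add, add_neg_cancel, Real.exp_zero, Complex.ofReal_one]

lemma annulusSum_eq_sum_schwarzTerm (r : ℝ) (z : ℂ) (N : ℕ) :
    annulusSum r z N =
      ∑ k ∈ Finset.Icc (-(N : ℤ)) N, schwarzTerm (Real.exp (2 * k * r) : ℂ) z := by
  simp only [annulusSum, schwarzTerm, cexp_two_mul_intCast_mul]

noncomputable def schwarzPair (r : ℝ) (k : ℕ) (z : ℂ) : ℂ :=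
  schwarzTerm (Real.exp (2 * (k + 1) * r) : ℂ) z +
    schwarzTerm (Real.exp (-(2 * (k + 1) * r)) : ℂ) z

noncomputable def annulusKernel (r : ℝ) (z : ℂ) : ℂ :=
  schwarzTerm 1 z + ∑' k, schwarzPair r k z

lemma annulusSum_eq_add_sum_schwarzPair (r : ℝ) (z : ℂ) (N : ℕ) :
    annulusSum r z N = schwarzTerm 1 z + ∑ k ∈ Finset.range N, schwarzPair r k z := by
  induction N with
  | zero => simp [annulusSum, schwarzTerm]
  | succ N ih =>
    have hIcc : Finset.Icc (-((N + 1 : ℕ) : ℤ)) (N + 1 : ℕ) =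
        insert ((N : ℤ) + 1) (insert (-((N : ℤ) + 1)) (Finset.Icc (-(N : ℤ)) N)) := by
      ext k
      simp only [Finset.mem_Icc, Finset.mem_insert]
      omega
    rw [Finset.sum_range_succ, ← add_assoc, ← ih, annulusSum_eq_sum_schwarzTerm,
      annulusSum_eq_sum_schwarzTerm, hIcc,
      Finset.sum_insert (by simp only [Finset.mem_insert, Finset.mem_Icc]; omega),
      Finset.sum_insert (by simp only [Finset.mem_Icc]; omega), schwarzPair]
    push_cast
    ring_nf

lemma ofReal_exp_ne_of_mem_closedAnnulus (k : ℕ) (hr : 0 < r) {w : ℂ}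
    (hw : w ∈ closedAnnulus r) :
    (Real.exp (2 * (k + 1) * r) : ℂ) ≠ w ∧ (Real.exp (-(2 * (k + 1) * r)) : ℂ) ≠ w := by
  have hk : r < 2 * (k + 1) * r := by nlinarith [k.cast_nonneg (α := ℝ)]
  constructor <;> refine ofReal_ne_of_norm_ne ?_ <;> rw [abs_of_pos (Real.exp_pos _)]
  · exact (hw.2.trans_lt (Real.one_lt_exp_iff.2 (by linarith))).ne
  · exact ((Real.exp_lt_exp.2 (by linarith)).trans_le hw.1).ne'

lemma exists_norm_schwarzPair_le (hr : 0 < r) :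
    ∃ C, 0 ≤ C ∧ ∀ k : ℕ, ∀ w ∈ closedAnnulus r,
      ‖schwarzPair r k w‖ ≤ C * ‖1 - w‖ * Real.exp (-(2 * r)) ^ k := by
  set q := Real.exp (2 * r) - 1
  set g := Real.exp (-r) - Real.exp (-(2 * r))
  have hq : 0 < q := sub_pos.2 (Real.one_lt_exp_iff.2 (by linarith))
  have hg : 0 < g := sub_pos.2 (Real.exp_lt_exp.2 (by linarith))
  refine ⟨4 / (q * g), by positivity, fun k w hw => ?_⟩
  set a := Real.exp (2 * (k + 1) * r)
  set b := Real.exp (-(2 * (k + 1) * r))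
  set E := Real.exp (2 * k * r)
  obtain ⟨haw, hbw⟩ := ofReal_exp_ne_of_mem_closedAnnulus k hr hw
  have hE : 1 ≤ E := Real.one_le_exp (by positivity)
  have hρE : Real.exp (-(2 * r)) ^ k = E⁻¹ := by
    rw [← Real.exp_nat_mul, ← Real.exp_neg]
    ring_nf
  have hnum : ‖2 * (1 - w ^ 2)‖ ≤ 4 * ‖1 - w‖ := by
    have h1w : ‖1 + w‖ ≤ 2 := (norm_add_le _ _).trans (by rw [norm_one]; linarith [hw.2])
    rw [show 2 * (1 - w ^ 2) = 2 * ((1 - w) * (1 + w)) by ring, norm_mul, norm_mul]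
    norm_num
    nlinarith [norm_nonneg (1 - w)]
  have hda : E * q ≤ ‖(a : ℂ) - w‖ := by
    have h := norm_sub_norm_le (a : ℂ) w
    have haE : a = E * Real.exp (2 * r) := by simp only [a, E]; rw [← Real.exp_add]; ring_nf
    rw [Complex.norm_real, Real.norm_of_nonneg (Real.exp_pos _).le] at h
    nlinarith [hw.2]
  have hdb : g ≤ ‖(b : ℂ) - w‖ := by
    have h := norm_sub_norm_le w (b : ℂ)
    have hb : b ≤ Real.exp (-(2 * r)) :=
      Real.exp_le_exp.2 (by nlinarith [k.cast_nonneg (α := ℝ)])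
    rw [norm_sub_rev, Complex.norm_real, Real.norm_of_nonneg (Real.exp_pos _).le] at h
    linarith [hw.1]
  rw [schwarzPair, schwarzTerm_add_schwarzTerm_of_mul_eq_one (ofReal_exp_mul_ofReal_exp_neg _)
    haw hbw, norm_div, norm_mul ((a : ℂ) - w)]
  calc _ ≤ 4 * ‖1 - w‖ / (E * q * g) :=
        div_le_div₀ (by positivity) hnum (by positivity)
          (mul_le_mul hda hdb hg.le (norm_nonneg _))
    _ = _ := by
        rw [hρE]
        field_simp

lemma exists_summable_norm_schwarzPair_le (hr : 0 < r) : ∃ u : ℕ → ℝ, Summable u ∧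
    ∀ k : ℕ, ∀ w ∈ closedAnnulus r, ‖schwarzPair r k w‖ ≤ u k := by
  obtain ⟨C, hC, hbound⟩ := exists_norm_schwarzPair_le hr
  refine ⟨fun k => C * 2 * Real.exp (-(2 * r)) ^ k,
    ((summable_geometric_of_lt_one (Real.exp_pos _).le
      (Real.exp_lt_one_iff.2 (by linarith))).mul_left _),
    fun k w hw => (hbound k w hw).trans ?_⟩
  have h1w : ‖1 - w‖ ≤ 2 := (norm_sub_le _ _).trans (by rw [norm_one]; linarith [hw.2])
  dsimp only
  gcongr

lemma summable_schwarzPair (hr : 0 < r) {w : ℂ} (hw : w ∈ closedAnnulus r) :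
    Summable fun k => schwarzPair r k w := by
  obtain ⟨u, hu, hbound⟩ := exists_summable_norm_schwarzPair_le hr
  exact hu.of_norm_bounded fun k => hbound k w hw

lemma tendsto_annulusSum (hr : 0 < r) {w : ℂ} (hw : w ∈ closedAnnulus r) :
    Tendsto (annulusSum r w) atTop (𝓝 (annulusKernel r w)) :=
  (((summable_schwarzPair hr hw).hasSum.tendsto_sum_nat).const_add (schwarzTerm 1 w)).congr
    fun N => (annulusSum_eq_add_sum_schwarzPair r w N).symm

lemma differentiableOn_schwarzPair (hr : 0 < r) (k : ℕ) :
    DifferentiableOn ℂ (schwarzPair r k) (closedAnnulus r) :=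
  ((differentiableOn_schwarzTerm _).mono fun _ hw =>
      (ofReal_exp_ne_of_mem_closedAnnulus k hr hw).1.symm).add
    ((differentiableOn_schwarzTerm _).mono fun _ hw =>
      (ofReal_exp_ne_of_mem_closedAnnulus k hr hw).2.symm)

lemma differentiableOn_annulusKernel (hr : 0 < r) :
    DifferentiableOn ℂ (annulusKernel r) (openAnnulus r) := by
  obtain ⟨u, hu, hbound⟩ := exists_summable_norm_schwarzPair_le hr
  have hsub : openAnnulus r ⊆ closedAnnulus r := fun _ hw => ⟨hw.1.le, hw.2.le⟩
  refine ((differentiableOn_schwarzTerm 1).mono fun w hw (h1 : w = 1) => ?_).add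
    (differentiableOn_tsum_of_summable_norm hu
      (fun k => (differentiableOn_schwarzPair hr k).mono hsub) isOpen_openAnnulus
      fun k w hw => hbound k w (hsub hw))
  simp [h1, openAnnulus] at hw

lemma continuousOn_annulusKernel (hr : 0 < r) :
    ContinuousOn (annulusKernel r) (closedAnnulus r \ {1}) := by
  obtain ⟨u, hu, hbound⟩ := exists_summable_norm_schwarzPair_le hr
  exact ((differentiableOn_schwarzTerm 1).continuousOn.mono fun _ hw => hw.2).add
    ((continuousOn_tsum (fun k => (differentiableOn_schwarzPair hr k).continuousOn) hu
      hbound).mono Set.sdiff_subset)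

lemma re_annulusKernel_of_norm_eq_one (hr : 0 < r) {w : ℂ} (hw : ‖w‖ = 1) :
    (annulusKernel r w).re = 0 := by
  have hwA : w ∈ closedAnnulus r := ⟨hw ▸ (Real.exp_lt_one_iff.2 (by linarith)).le, hw.le⟩
  have hpair : ∀ k, (schwarzPair r k w).re = 0 := fun k => by
    obtain ⟨ha, hb⟩ := ofReal_exp_ne_of_mem_closedAnnulus k hr hwA
    rw [schwarzPair, add_re]
    refine re_schwarzTerm_add_re_schwarzTerm_eq_zero ?_ ha hb
    rw [hw, ← Real.exp_add, add_neg_cancel, Real.exp_zero, one_pow]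
  rw [annulusKernel, add_re, re_tsum (summable_schwarzPair hr hwA), tsum_congr hpair, tsum_zero,
    ← Complex.ofReal_one, re_schwarzTerm_ofReal, hw]
  simp

lemma re_annulusKernel_nonneg_of_norm_eq (hr : 0 < r) {w : ℂ} (hw : ‖w‖ = Real.exp (-r)) :
    0 ≤ (annulusKernel r w).re := by
  have hwA : w ∈ closedAnnulus r := ⟨hw.ge, hw ▸ (Real.exp_lt_one_iff.2 (by linarith)).le⟩
  refine ge_of_tendsto ((Complex.continuous_re.tendsto _).comp (tendsto_annulusSum hr hwA))
    (Eventually.of_forall fun N => ?_)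
  have hne : ∀ k : ℤ, (Real.exp (2 * k * r) : ℂ) ≠ w := fun k => by
    refine ofReal_ne_of_norm_ne ?_
    rw [hw, abs_of_pos (Real.exp_pos _), Ne, Real.exp_eq_exp]
    intro h
    have : ((2 * k + 1 : ℤ) : ℝ) * r = 0 := by push_cast; linarith
    have := (mul_eq_zero.1 this).resolve_right hr.ne'
    norm_cast at this
    omega
  have hcancel : ∑ k ∈ Finset.Icc (-(N : ℤ)) (N - 1),
      (schwarzTerm (Real.exp (2 * k * r) : ℂ) w).re = 0 := by
    refine Finset.sum_involution (fun k _ => -k - 1) (fun k _ => ?_) (fun k _ _ => by omega)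
      (fun k hk => by simp only [Finset.mem_Icc] at hk ⊢; omega) (fun k _ => by omega)
    refine re_schwarzTerm_add_re_schwarzTerm_eq_zero ?_ (hne k) (by exact_mod_cast hne (-k - 1))
    rw [hw, ← Real.exp_add, ← Real.exp_nat_mul]
    push_cast
    ring_nf
  have hIcc : Finset.Icc (-(N : ℤ)) N = insert (N : ℤ) (Finset.Icc (-(N : ℤ)) (N - 1)) := by
    ext k
    simp only [Finset.mem_Icc, Finset.mem_insert]
    omega
  rw [Function.comp_apply, annulusSum_eq_sum_schwarzTerm, re_sum, hIcc,
    Finset.sum_insert (by simp), hcancel, add_zero]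
  refine re_schwarzTerm_ofReal_nonneg ?_
  rw [hw, abs_of_pos (Real.exp_pos _), Real.exp_le_exp]
  have : (0 : ℝ) ≤ (N : ℤ) := by positivity
  nlinarith

lemma exists_neg_mul_dist_le_re_annulusKernel (hr : 0 < r) :
    ∃ C, ∀ w ∈ closedAnnulus r, -(C * dist w 1) ≤ (annulusKernel r w).re := by
  obtain ⟨C, -, hbound⟩ := exists_norm_schwarzPair_le hr
  set ρ := Real.exp (-(2 * r))
  have hρ : ρ < 1 := Real.exp_lt_one_iff.2 (by linarith)
  refine ⟨C * (1 - ρ)⁻¹, fun w hw => ?_⟩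
  have hgeom : HasSum (fun k => -(C * ‖1 - w‖ * ρ ^ k)) (-(C * ‖1 - w‖ * (1 - ρ)⁻¹)) :=
    ((hasSum_geometric_of_lt_one (Real.exp_pos _).le hρ).mul_left _).neg
  have hT := hasSum_le (fun k => ?_) hgeom (hasSum_re (summable_schwarzPair hr hw).hasSum)
  · have h1 : 0 ≤ (schwarzTerm 1 w).re := by
      rw [← Complex.ofReal_one]
      exact re_schwarzTerm_ofReal_nonneg (by simpa using hw.2)
    rw [annulusKernel, add_re, dist_eq_norm, norm_sub_rev]
    linarith
  · exact neg_le_of_abs_le ((abs_re_le_norm _).trans (hbound k w hw))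

lemma neg_exp_mem_openAnnulus (hr : 0 < r) : (-Real.exp (-(r / 2)) : ℂ) ∈ openAnnulus r := by
  simp only [openAnnulus, Set.mem_ofPred_eq, norm_neg, Complex.norm_real, Real.norm_of_nonneg
    (Real.exp_pos _).le, Real.exp_lt_exp, Real.exp_lt_one_iff]
  constructor <;> linarith

lemma re_annulusKernel_neg_exp_pos (hr : 0 < r) :
    0 < (annulusKernel r (-Real.exp (-(r / 2)))).re := by
  set t := Real.exp (-(r / 2))
  have ht : t < 1 := Real.exp_lt_one_iff.2 (by linarith)
  have ht0 : 0 < t := Real.exp_pos _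
  have htA : (-t : ℂ) ∈ closedAnnulus r := by
    have := neg_exp_mem_openAnnulus hr
    exact ⟨this.1.le, this.2.le⟩
  have hpair : ∀ k, 0 ≤ (schwarzPair r k (-t)).re := fun k => by
    obtain ⟨ha, hb⟩ := ofReal_exp_ne_of_mem_closedAnnulus k hr htA
    set a := Real.exp (2 * (k + 1) * r)
    set b := Real.exp (-(2 * (k + 1) * r))
    have hab : (a : ℂ) * b = 1 := ofReal_exp_mul_ofReal_exp_neg _
    rw [schwarzPair, schwarzTerm_add_schwarzTerm_of_mul_eq_one hab ha hb,
      show 2 * (1 - (-t : ℂ) ^ 2) / ((a - -t) * (b - -t)) =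
          ((2 * (1 - t ^ 2) / ((a + t) * (b + t)) : ℝ) : ℂ) by push_cast; ring,
      ofReal_re]
    have : 0 ≤ 1 - t ^ 2 := by nlinarith
    positivity
  have h1 : 0 < (schwarzTerm 1 (-t)).re := by
    rw [← Complex.ofReal_one]
    exact re_schwarzTerm_ofReal_pos (by simpa [abs_of_pos ht0] using ht)
  rw [annulusKernel, add_re, re_tsum (summable_schwarzPair hr htA)]
  exact add_pos_of_pos_of_nonneg h1 (tsum_nonneg hpair)

theorem re_annulusKernel_pos (hr : 0 < r) {z : ℂ} (hz : z ∈ openAnnulus r) :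
    0 < (annulusKernel r z).re := by
  obtain ⟨C, hC⟩ := exists_neg_mul_dist_le_re_annulusKernel hr
  have hnn : ∀ w ∈ openAnnulus r, 0 ≤ (annulusKernel r w).re := fun w hw => by
    refine re_nonneg_of_frontier_of_lower_bound isBounded_openAnnulus
      (differentiableOn_annulusKernel hr)
      ((continuousOn_annulusKernel hr).mono
        (Set.sdiff_subset_sdiff_left closure_openAnnulus_subset))
      (fun v hv _ => ?_) (fun v hv _ => hC v (closure_openAnnulus_subset hv)) hw ?_
    · rcases frontier_openAnnulus_subset hv with hv | hv
      · exact re_annulusKernel_nonneg_of_norm_eq hr hv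
      · exact (re_annulusKernel_of_norm_eq_one hr hv).ge
    · rintro rfl
      simp [openAnnulus] at hw
  exact re_pos_of_re_nonneg isOpen_openAnnulus isPreconnected_openAnnulus
    (differentiableOn_annulusKernel hr) hnn (neg_exp_mem_openAnnulus hr)
    (re_annulusKernel_neg_exp_pos hr) hz

end Annulus

/-- For every `r > 0`, `Re S_r > 0` on the annulus `A_r = {e^{-r} < |z| < 1}`. -/
theorem stmt3 (r : ℝ) (hr : 0 < r) (z : ℂ)
    (hz1 : Real.exp (-r) < ‖z‖) (hz2 : ‖z‖ < 1) :
    ∃ S : ℂ, Tendsto (fun N => annulusSum r z N) atTop (𝓝 S) ∧ 0 < S.re :=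
  ⟨annulusKernel r z, tendsto_annulusSum hr ⟨hz1.le, hz2.le⟩,
    re_annulusKernel_pos hr ⟨hz1, hz2⟩⟩
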